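/- Every quasi-binary proper forest-based m-network N (m ≥ 2) can be transformed by a finite sequence of resolution operations (each replacing one parent-arc of an indegree-≥3 reticulation as in the resolution lemma) into a binary m-network N^b that is also proper forest-based. -/

import Mathlib

open Finset

namespace FB

/-- A finite directed graph given by its arc set. -/
structure Net (V : Type) where
  arcs : Finset (V × V)

namespace Net

variable {V : Type} [Fintype V] [DecidableEq V]

/-- `(u,v)` is an arc. -/
def Arc (N : Net V) (u v : V) : Prop := (u, v) ∈ N.arcs

/-- Parents of a vertex. -/
def parents (N : Net V) (v : V) : Finset V := univ.filter (fun u => (u, v) ∈ N.arcs)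

/-- Children of a vertex. -/
def children (N : Net V) (v : V) : Finset V := univ.filter (fun u => (v, u) ∈ N.arcs)

def inDeg (N : Net V) (v : V) : ℕ := (N.parents v).card
def outDeg (N : Net V) (v : V) : ℕ := (N.children v).card

def IsRoot (N : Net V) (v : V) : Prop := N.inDeg v = 0
def IsLeaf (N : Net V) (v : V) : Prop := N.outDeg v = 0
def IsRetic (N : Net V) (v : V) : Prop := 2 ≤ N.inDeg v
def IsTreeVertex (N : Net V) (v : V) : Prop := ¬ N.IsLeaf v ∧ N.inDeg v ≤ 1

instance (N : Net V) : DecidablePred N.IsRoot := fun v => decidable_of_iff (N.inDeg v = 0) Iff.rfl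
instance (N : Net V) : DecidablePred N.IsLeaf := fun v => decidable_of_iff (N.outDeg v = 0) Iff.rfl
instance (N : Net V) : DecidablePred N.IsRetic := fun v => decidable_of_iff (2 ≤ N.inDeg v) Iff.rfl

def roots (N : Net V) : Finset V := univ.filter (fun v => N.IsRoot v)
def leaves (N : Net V) : Finset V := univ.filter (fun v => N.IsLeaf v)

/-- Directed-acyclicity. -/
def Acyclic (N : Net V) : Prop := ∀ v, ¬ Relation.TransGen N.Arc v v

/-- Weak (undirected) connectivity. -/
def Connected (N : Net V) : Prop :=
  ∀ u v : V, Relation.ReflTransGen (fun a b => N.Arc a b ∨ N.Arc b a) u v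

/-- `N` is a network: a connected DAG in which leaves (sinks) have indegree 1,
roots (sources) have outdegree ≥ 2, reticulations have outdegree 1, and
no vertex has both indegree 1 and outdegree 1. -/
def IsNetwork (N : Net V) : Prop :=
  N.Acyclic ∧ N.Connected ∧
  (∀ v, N.IsLeaf v → N.inDeg v = 1) ∧
  (∀ v, N.IsRoot v → 2 ≤ N.outDeg v) ∧
  (∀ v, N.IsRetic v → N.outDeg v = 1) ∧
  (∀ v, ¬ (N.inDeg v = 1 ∧ N.outDeg v = 1))

/-- An `m`-network: a network with exactly `m` roots. -/
def IsMNetwork (N : Net V) (m : ℕ) : Prop := N.IsNetwork ∧ N.roots.card = m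

/-- `u` and `v` are in the same connected component (tree) of `N`. -/
def SameTree (N : Net V) (u v : V) : Prop :=
  Relation.ReflTransGen (fun a b => N.Arc a b ∨ N.Arc b a) u v

/-- `A'` spans a subdivision forest of `N`: a spanning subgraph in which every
vertex has indegree ≤ 1, with the same leaf set as `N`, and such that every
arc of `N` outside `A'` has its two endpoints in different trees. -/
def IsSubdivisionForest (N : Net V) (A' : Finset (V × V)) : Prop :=
  A' ⊆ N.arcs ∧
  (∀ v, (Net.mk A' : Net V).inDeg v ≤ 1) ∧
  (∀ v, (Net.mk A' : Net V).IsLeaf v ↔ N.IsLeaf v) ∧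
  (∀ a ∈ N.arcs, a ∉ A' → ¬ (Net.mk A' : Net V).SameTree a.1 a.2)

/-- `N` is proper forest-based: it has a subdivision forest with exactly `m`
trees (equivalently, `m` sources, as each tree of the forest has a unique source). -/
def ProperForestBased (N : Net V) (m : ℕ) : Prop :=
  ∃ A' : Finset (V × V), N.IsSubdivisionForest A' ∧ (Net.mk A' : Net V).roots.card = m

/-- (C1): every non-root vertex has exactly one parent of the same color. -/
def C1 {C : Type} (N : Net V) (σ : V → C) : Prop :=
  ∀ v, ¬ N.IsRoot v → ∃! u, u ∈ N.parents v ∧ σ u = σ v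

/-- (C2): every internal (non-leaf) vertex has at least one child of the same color. -/
def C2 {C : Type} (N : Net V) (σ : V → C) : Prop :=
  ∀ v, ¬ N.IsLeaf v → ∃ u ∈ N.children v, σ u = σ v

def Binary (N : Net V) : Prop :=
  (∀ v, N.inDeg v ≤ 2 ∧ N.outDeg v ≤ 2) ∧
  (∀ v, ¬ N.IsRoot v → N.inDeg v + N.outDeg v = 1 ∨ N.inDeg v + N.outDeg v = 3)

def SemiBinary (N : Net V) : Prop := ∀ v, N.IsRetic v → N.inDeg v = 2

def QuasiBinary (N : Net V) : Prop :=
  (∀ v, N.IsTreeVertex v → N.outDeg v = 2) ∧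
  (∀ v, N.IsRetic v → N.inDeg v = 2 ∨ N.inDeg v = 3)

def TreeChild (N : Net V) : Prop :=
  ∀ v, ¬ N.IsLeaf v → ∃ u ∈ N.children v, N.inDeg u ≤ 1

/-- An omnian: an internal vertex all of whose children are reticulations. -/
def Omnian (N : Net V) (v : V) : Prop := ¬ N.IsLeaf v ∧ ∀ u ∈ N.children v, N.IsRetic u

instance (N : Net V) : DecidablePred N.Omnian :=
  fun v => decidable_of_iff (¬ N.IsLeaf v ∧ ∀ u ∈ N.children v, N.IsRetic u) Iff.rfl

/-- `GammaRel N g u` holds iff `g = γ_N(u)`: `g` has indegree ≠ 1 and there is a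
directed path from `g` to `u` all of whose vertices after `g` have indegree 1. -/
def GammaRel (N : Net V) (g u : V) : Prop :=
  N.inDeg g ≠ 1 ∧ Relation.ReflTransGen (fun a b => N.Arc a b ∧ N.inDeg b = 1) g u

/-- The graph `Γ(N)`: vertices of indegree ≠ 1, with `v₁ ~ v₂` whenever there are
distinct `u₁, u₂` with `γ_N(u₁) = v₁`, `γ_N(u₂) = v₂` sharing a child in `N`. -/
def gammaGraph (N : Net V) : SimpleGraph V where
  Adj v₁ v₂ := v₁ ≠ v₂ ∧ ∃ u₁ u₂, u₁ ≠ u₂ ∧ N.GammaRel v₁ u₁ ∧ N.GammaRel v₂ u₂ ∧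
      ∃ c, N.Arc u₁ c ∧ N.Arc u₂ c
  symm := by
    refine ⟨?_⟩
    rintro a b ⟨hne, u₁, u₂, h12, h1, h2, c, hc1, hc2⟩
    exact ⟨hne.symm, u₂, u₁, h12.symm, h2, h1, c, hc2, hc1⟩
  loopless := by refine ⟨?_⟩; rintro a ⟨hne, -⟩; exact hne rfl

/-- An omni-extension of `Γ(N)`: a supergraph of `Γ(N)` on the same vertex set such
that for every omnian `v` there is a child `h` of `v` whose other parent `u`
satisfies that `{h, γ_N(u)}` is an edge. -/
def OmniExtension (N : Net V) (G : SimpleGraph V) : Prop :=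
  N.gammaGraph ≤ G ∧
  ∀ v, N.Omnian v → ∃ h ∈ N.children v, ∃ u ∈ N.parents h, u ≠ v ∧
    ∃ g, N.GammaRel g u ∧ G.Adj h g

/-- A minimal omni-extension: no proper subgraph on the same vertex set is an
omni-extension. -/
def MinOmniExtension (N : Net V) (G : SimpleGraph V) : Prop :=
  N.OmniExtension G ∧ ∀ G' : SimpleGraph V, G' ≤ G → N.OmniExtension G' → G' = G

/-- (F1): the coloring restricted to the roots is a bijection onto the colors. -/
def F1 {m : ℕ} (N : Net V) (σ : V → Fin m) : Prop :=
  Set.InjOn σ ↑N.roots ∧ ∀ c : Fin m, ∃ ρ ∈ N.roots, σ ρ = c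

/-- (F2): for every root `u` and reticulation `v` of the same color, there is a
directed path from `u` to `v` on which every reticulation has that color. -/
def F2 {m : ℕ} (N : Net V) (σ : V → Fin m) : Prop :=
  ∀ u, N.IsRoot u → ∀ v, N.IsRetic v → σ u = σ v →
    Relation.ReflTransGen (fun a b => N.Arc a b ∧ (N.IsRetic b → σ b = σ u)) u v

/-- The resolution operation at a reticulation `v` with chosen parent `p` and
unique child `c`: new vertices `v₁ = Sum.inr 0`, `v₂ = Sum.inr 1`, `x_v = Sum.inr 2`;
arcs `(p,v)` and `(v,c)` are removed and arcs `(v,v₁)`, `(v₁,v₂)`, `(v₂,c)`,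
`(v₁,x_v)`, `(p,v₂)` are added. -/
def resolve (N : Net V) (p v c : V) : Net (V ⊕ Fin 3) :=
  ⟨((N.arcs.erase (p, v)).erase (v, c)).image (fun a => (Sum.inl a.1, Sum.inl a.2)) ∪
    {(Sum.inl v, Sum.inr 0), (Sum.inr 0, Sum.inr 1), (Sum.inr 1, Sum.inl c),
     (Sum.inr 0, Sum.inr 2), (Sum.inl p, Sum.inr 1)}⟩

end Net

/-- Isomorphism of arc-sets under a bijection of vertices. -/
def NetIso {V W : Type} (N : Net V) (M : Net W) : Prop :=
  ∃ e : V ≃ W, ∀ u v : V, (u, v) ∈ N.arcs ↔ (e u, e v) ∈ M.arcs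

end FB

namespace FB

/-- A bundled finite network (to allow sequences of networks on changing vertex types). -/
structure BNet where
  V : Type
  [fin : Fintype V]
  [deq : DecidableEq V]
  net : Net V

attribute [instance] BNet.fin BNet.deq

/-- One resolution operation: `M'` is (isomorphic to) the network obtained from `M`
by resolving some reticulation `v` of indegree ≥ 3 with unique child `c` at some
parent `p`. -/
def ResolveStep (M M' : BNet) : Prop :=
  ∃ (p v c : M.V), M.net.IsRetic v ∧ 3 ≤ M.net.inDeg v ∧ M.net.children v = {c} ∧
    p ∈ M.net.parents v ∧ NetIso M'.net (M.net.resolve p v c)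

end FB

set_option linter.unusedSectionVars false
set_option maxHeartbeats 2000000

namespace FB
namespace Net

variable {V : Type} [Fintype V] [DecidableEq V]

lemma mem_parents {N : Net V} {u v : V} : u ∈ N.parents v ↔ (u, v) ∈ N.arcs := by
  simp [parents]

lemma mem_children {N : Net V} {u v : V} : u ∈ N.children v ↔ (v, u) ∈ N.arcs := by
  simp [children]

section Resolve

variable (N : Net V) (p v c : V)

lemma arc_resolve_iff (x y : V ⊕ Fin 3) :
    (x, y) ∈ (N.resolve p v c).arcs ↔
      (∃ a b, (a, b) ∈ N.arcs ∧ (a, b) ≠ (p, v) ∧ (a, b) ≠ (v, c) ∧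
        x = Sum.inl a ∧ y = Sum.inl b) ∨
      (x = Sum.inl v ∧ y = Sum.inr 0) ∨ (x = Sum.inr 0 ∧ y = Sum.inr 1) ∨
      (x = Sum.inr 1 ∧ y = Sum.inl c) ∨ (x = Sum.inr 0 ∧ y = Sum.inr 2) ∨
      (x = Sum.inl p ∧ y = Sum.inr 1) := by
  simp only [resolve, Finset.mem_union, Finset.mem_image, Finset.mem_erase,
    Finset.mem_insert, Finset.mem_singleton, Prod.mk.injEq]
  constructor
  · rintro (⟨⟨a, b⟩, ⟨h1, h2, h3⟩, h4, h5⟩ | h)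
    · exact Or.inl ⟨a, b, h3, h2, h1, h4.symm, h5.symm⟩
    · tauto
  · rintro (⟨a, b, h1, h2, h3, h4, h5⟩ | h)
    · exact Or.inl ⟨⟨a, b⟩, ⟨h3, h2, h1⟩, h4.symm, h5.symm⟩
    · tauto

variable {N p v c}

lemma arc_ll {a b : V} :
    (Sum.inl a, Sum.inl b) ∈ (N.resolve p v c).arcs ↔
      (a, b) ∈ N.arcs ∧ (a, b) ≠ (p, v) ∧ (a, b) ≠ (v, c) := by
  rw [arc_resolve_iff]
  constructor
  · rintro (⟨a', b', h1, h2, h3, h4, h5⟩ | h) <;>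
      simp_all [Sum.inl.injEq]
  · rintro ⟨h1, h2, h3⟩
    exact Or.inl ⟨a, b, h1, h2, h3, rfl, rfl⟩

lemma arc_lr {a : V} {i : Fin 3} :
    (Sum.inl a, Sum.inr i) ∈ (N.resolve p v c).arcs ↔
      (a = v ∧ i = 0) ∨ (a = p ∧ i = 1) := by
  rw [arc_resolve_iff]; constructor
  · rintro (⟨a', b', h1, h2, h3, h4, h5⟩ | h) <;> simp_all
  · rintro (⟨rfl, rfl⟩ | ⟨rfl, rfl⟩) <;> simp

lemma arc_rl {i : Fin 3} {b : V} :
    (Sum.inr i, Sum.inl b) ∈ (N.resolve p v c).arcs ↔ i = 1 ∧ b = c := by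
  rw [arc_resolve_iff]; constructor
  · rintro (⟨a', b', h1, h2, h3, h4, h5⟩ | h) <;> simp_all
  · rintro ⟨rfl, rfl⟩; simp

lemma arc_rr {i j : Fin 3} :
    (Sum.inr i, Sum.inr j) ∈ (N.resolve p v c).arcs ↔
      (i = 0 ∧ j = 1) ∨ (i = 0 ∧ j = 2) := by
  rw [arc_resolve_iff]; constructor
  · rintro (⟨a', b', h1, h2, h3, h4, h5⟩ | h) <;> simp_all
  · rintro (⟨rfl, rfl⟩ | ⟨rfl, rfl⟩) <;> simp

end Resolve

section Degrees

variable {N : Net V} {p v c a : V}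

/-- Parents in the resolved network. -/
lemma resolve_parents_inl (ha : a ≠ v) (hac : a ≠ c) :
    (N.resolve p v c).parents (Sum.inl a) = (N.parents a).image Sum.inl := by
  ext x
  rcases x with b | i
  · simp only [mem_parents, arc_ll, Finset.mem_image, Sum.inl.injEq]
    constructor
    · rintro ⟨h, -, -⟩; exact ⟨b, h, rfl⟩
    · rintro ⟨b', hb', rfl⟩
      exact ⟨hb', by rintro h; injection h with h1 h2; exact ha h2,
        by rintro h; injection h with h1 h2; exact hac h2⟩
  · simp only [mem_parents, arc_rl, Finset.mem_image]
    constructor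
    · rintro ⟨rfl, rfl⟩; exact absurd rfl hac
    · rintro ⟨b', hb', h⟩; cases h

lemma resolve_parents_v (hvc' : v ≠ c) :
    (N.resolve p v c).parents (Sum.inl v) = ((N.parents v).erase p).image Sum.inl := by
  ext x
  rcases x with b | i
  · simp only [mem_parents, arc_ll, Finset.mem_image, Finset.mem_erase, Sum.inl.injEq]
    constructor
    · rintro ⟨h, h2, -⟩
      exact ⟨b, ⟨fun hb => h2 (by rw [hb]), h⟩, rfl⟩
    · rintro ⟨b', ⟨hb1, hb2⟩, rfl⟩
      exact ⟨hb2, by rintro h; injection h with h1 h2; exact hb1 h1,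
        by rintro h; injection h with h1 h2; exact hvc' h2⟩
  · simp only [mem_parents, arc_rl, Finset.mem_image]
    constructor
    · rintro ⟨rfl, rfl⟩; exact absurd rfl hvc'
    · rintro ⟨b', hb', h⟩; cases h

lemma resolve_parents_c (hpc : p ≠ c) (hvc' : v ≠ c) :
    (N.resolve p v c).parents (Sum.inl c) =
      insert (Sum.inr 1) (((N.parents c).erase v).image Sum.inl) := by
  ext x
  rcases x with b | i
  · simp only [mem_parents, arc_ll, Finset.mem_image, Finset.mem_erase,
      Finset.mem_insert, Sum.inl.injEq]
    constructor
    · rintro ⟨h, -, h3⟩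
      refine Or.inr ⟨b, ⟨fun hb => h3 (by rw [hb]), h⟩, rfl⟩
    · rintro (h | ⟨b', ⟨hb1, hb2⟩, rfl⟩); · cases h
      exact ⟨hb2, by rintro h; injection h with h1 h2; exact hvc' h2.symm,
        by rintro h; injection h with h1 h2; exact hb1 h1⟩
  · simp only [mem_parents, arc_rl, Finset.mem_insert, Finset.mem_image]
    constructor
    · rintro ⟨rfl, -⟩; exact Or.inl rfl
    · rintro (h | ⟨b', hb', h⟩)
      · injection h with h'; exact ⟨h', trivial⟩
      · cases h

lemma resolve_parents_r0 :
    (N.resolve p v c).parents (Sum.inr 0) = {Sum.inl v} := by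
  ext x
  rcases x with b | i
  · simp only [mem_parents, arc_lr, Finset.mem_singleton, Sum.inl.injEq]
    constructor
    · rintro (⟨rfl, -⟩ | ⟨rfl, h⟩); · rfl
      · exact absurd h (by decide)
    · rintro rfl; exact Or.inl ⟨rfl, trivial⟩
  · simp only [mem_parents, arc_rr, Finset.mem_singleton]
    constructor
    · rintro (⟨-, h⟩ | ⟨-, h⟩) <;> exact absurd h (by decide)
    · rintro h; cases h

lemma resolve_parents_r1 :
    (N.resolve p v c).parents (Sum.inr 1) = {Sum.inl p, Sum.inr 0} := by
  ext x
  rcases x with b | i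
  · simp only [mem_parents, arc_lr, Finset.mem_insert, Finset.mem_singleton, Sum.inl.injEq]
    constructor
    · rintro (⟨rfl, h⟩ | ⟨rfl, -⟩); · exact absurd h (by decide)
      · exact Or.inl rfl
    · rintro (rfl | h)
      · exact Or.inr ⟨rfl, trivial⟩
      · cases h
  · simp only [mem_parents, arc_rr, Finset.mem_insert, Finset.mem_singleton]
    constructor
    · rintro (⟨rfl, -⟩ | ⟨rfl, h⟩); · exact Or.inr rfl
      · exact absurd h (by decide)
    · rintro (h | h); · cases h
      · injection h with h'; exact Or.inl ⟨h', trivial⟩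

lemma resolve_parents_r2 :
    (N.resolve p v c).parents (Sum.inr 2) = {Sum.inr 0} := by
  ext x
  rcases x with b | i
  · simp only [mem_parents, arc_lr, Finset.mem_singleton]
    constructor
    · rintro (⟨-, h⟩ | ⟨-, h⟩) <;> exact absurd h (by decide)
    · rintro h; cases h
  · simp only [mem_parents, arc_rr, Finset.mem_singleton]
    constructor
    · rintro (⟨rfl, h⟩ | ⟨rfl, -⟩); · exact absurd h (by decide)
      · rfl
    · rintro h; injection h with h'; exact Or.inr ⟨h', trivial⟩

/-- Children in the resolved network. -/
lemma resolve_children_inl (ha : a ≠ v) (hap : a ≠ p) :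
    (N.resolve p v c).children (Sum.inl a) = (N.children a).image Sum.inl := by
  ext x
  rcases x with b | i
  · simp only [mem_children, arc_ll, Finset.mem_image, Sum.inl.injEq]
    constructor
    · rintro ⟨h, -, -⟩; exact ⟨b, h, rfl⟩
    · rintro ⟨b', hb', rfl⟩
      exact ⟨hb', by rintro h; injection h with h1 h2; exact hap h1,
        by rintro h; injection h with h1 h2; exact ha h1⟩
  · simp only [mem_children, arc_lr, Finset.mem_image]
    constructor
    · rintro (⟨rfl, -⟩ | ⟨rfl, -⟩); · exact absurd rfl ha
      · exact absurd rfl hap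
    · rintro ⟨b', hb', h⟩; cases h

lemma resolve_children_v (hvc_only : N.children v = {c}) (hpv' : p ≠ v) :
    (N.resolve p v c).children (Sum.inl v) = {Sum.inr 0} := by
  ext x
  rcases x with b | i
  · simp only [mem_children, arc_ll, Finset.mem_singleton]
    constructor
    · rintro ⟨h, -, h3⟩
      have hb : b ∈ N.children v := mem_children.2 h
      rw [hvc_only, Finset.mem_singleton] at hb
      exact absurd (by rw [hb]) h3
    · rintro h; cases h
  · simp only [mem_children, arc_lr, Finset.mem_singleton]
    constructor
    · rintro (⟨-, rfl⟩ | ⟨h, -⟩); · rfl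
      · exact absurd h.symm hpv'
    · rintro h; injection h with h'; exact Or.inl ⟨trivial, h'⟩

lemma resolve_children_p (hpv' : p ≠ v) :
    (N.resolve p v c).children (Sum.inl p) =
      insert (Sum.inr 1) (((N.children p).erase v).image Sum.inl) := by
  ext x
  rcases x with b | i
  · simp only [mem_children, arc_ll, Finset.mem_image, Finset.mem_erase,
      Finset.mem_insert, Sum.inl.injEq]
    constructor
    · rintro ⟨h, h2, -⟩
      exact Or.inr ⟨b, ⟨fun hb => h2 (by rw [hb]), h⟩, rfl⟩
    · rintro (h | ⟨b', ⟨hb1, hb2⟩, rfl⟩); · cases h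
      exact ⟨hb2, by rintro h; injection h with h1 h2; exact hb1 h2,
        by rintro h; injection h with h1 h2; exact hpv' h1⟩
  · simp only [mem_children, arc_lr, Finset.mem_insert, Finset.mem_image]
    constructor
    · rintro (⟨h, -⟩ | ⟨-, rfl⟩); · exact absurd h hpv'
      · exact Or.inl rfl
    · rintro (h | ⟨b', hb', h⟩)
      · injection h with h'; exact Or.inr ⟨trivial, h'⟩
      · cases h

lemma resolve_children_r0 :
    (N.resolve p v c).children (Sum.inr 0) = {Sum.inr 1, Sum.inr 2} := by
  ext x
  rcases x with b | i
  · simp only [mem_children, arc_rl, Finset.mem_insert, Finset.mem_singleton]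
    constructor
    · rintro ⟨h, -⟩; exact absurd h (by decide)
    · rintro (h | h) <;> cases h
  · simp only [mem_children, arc_rr, Finset.mem_insert, Finset.mem_singleton]
    constructor
    · rintro (⟨-, rfl⟩ | ⟨-, rfl⟩); · exact Or.inl rfl
      · exact Or.inr rfl
    · rintro (h | h) <;> injection h with h'
      · exact Or.inl ⟨trivial, h'⟩
      · exact Or.inr ⟨trivial, h'⟩

lemma resolve_children_r1 :
    (N.resolve p v c).children (Sum.inr 1) = {Sum.inl c} := by
  ext x
  rcases x with b | i
  · simp only [mem_children, arc_rl, Finset.mem_singleton, Sum.inl.injEq]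
    constructor
    · rintro ⟨-, rfl⟩; rfl
    · rintro rfl; exact ⟨trivial, rfl⟩
  · simp only [mem_children, arc_rr, Finset.mem_singleton]
    constructor
    · rintro (⟨h, -⟩ | ⟨h, -⟩) <;> exact absurd h (by decide)
    · rintro h; cases h

lemma resolve_children_r2 :
    (N.resolve p v c).children (Sum.inr 2) = ∅ := by
  ext x
  rcases x with b | i
  · simp only [mem_children, arc_rl, Finset.notMem_empty, iff_false]
    rintro ⟨h, -⟩; exact absurd h (by decide)
  · simp only [mem_children, arc_rr, Finset.notMem_empty, iff_false]
    rintro (⟨h, -⟩ | ⟨h, -⟩) <;> exact absurd h (by decide)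

end Degrees

section DegCards

variable {N : Net V} {p v c a : V}

lemma resolve_inDeg_inl (ha : a ≠ v) (hac : a ≠ c) :
    (N.resolve p v c).inDeg (Sum.inl a) = N.inDeg a := by
  rw [inDeg, resolve_parents_inl ha hac,
    Finset.card_image_of_injective _ Sum.inl_injective]; rfl

lemma resolve_inDeg_v (hp : p ∈ N.parents v) (hvc' : v ≠ c) :
    (N.resolve p v c).inDeg (Sum.inl v) = N.inDeg v - 1 := by
  rw [inDeg, resolve_parents_v hvc',
    Finset.card_image_of_injective _ Sum.inl_injective,
    Finset.card_erase_of_mem hp]; rfl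

lemma resolve_inDeg_c (hpc : p ≠ c) (hvc' : v ≠ c) (hv : v ∈ N.parents c) :
    (N.resolve p v c).inDeg (Sum.inl c) = N.inDeg c := by
  rw [inDeg, resolve_parents_c hpc hvc', Finset.card_insert_of_notMem (by simp),
    Finset.card_image_of_injective _ Sum.inl_injective,
    Finset.card_erase_of_mem hv]
  have : 0 < (N.parents c).card := Finset.card_pos.2 ⟨v, hv⟩
  unfold inDeg
  omega

lemma resolve_inDeg_r0 : (N.resolve p v c).inDeg (Sum.inr 0) = 1 := by
  rw [inDeg, resolve_parents_r0]; rfl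

lemma resolve_inDeg_r1 : (N.resolve p v c).inDeg (Sum.inr 1) = 2 := by
  rw [inDeg, resolve_parents_r1, Finset.card_insert_of_notMem (by simp)]; rfl

lemma resolve_inDeg_r2 : (N.resolve p v c).inDeg (Sum.inr 2) = 1 := by
  rw [inDeg, resolve_parents_r2]; rfl

lemma resolve_outDeg_inl (ha : a ≠ v) (hap : a ≠ p) :
    (N.resolve p v c).outDeg (Sum.inl a) = N.outDeg a := by
  rw [outDeg, resolve_children_inl ha hap,
    Finset.card_image_of_injective _ Sum.inl_injective]; rfl

lemma resolve_outDeg_v (hvc_only : N.children v = {c}) (hpv' : p ≠ v) :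
    (N.resolve p v c).outDeg (Sum.inl v) = 1 := by
  rw [outDeg, resolve_children_v hvc_only hpv']; rfl

lemma resolve_outDeg_p (hpv' : p ≠ v) (hv : v ∈ N.children p) :
    (N.resolve p v c).outDeg (Sum.inl p) = N.outDeg p := by
  rw [outDeg, resolve_children_p hpv', Finset.card_insert_of_notMem (by simp),
    Finset.card_image_of_injective _ Sum.inl_injective,
    Finset.card_erase_of_mem hv]
  have : 0 < (N.children p).card := Finset.card_pos.2 ⟨v, hv⟩
  unfold outDeg
  omega

lemma resolve_outDeg_r0 : (N.resolve p v c).outDeg (Sum.inr 0) = 2 := by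
  rw [outDeg, resolve_children_r0, Finset.card_insert_of_notMem (by simp)]; rfl

lemma resolve_outDeg_r1 : (N.resolve p v c).outDeg (Sum.inr 1) = 1 := by
  rw [outDeg, resolve_children_r1]; rfl

lemma resolve_outDeg_r2 : (N.resolve p v c).outDeg (Sum.inr 2) = 0 := by
  rw [outDeg, resolve_children_r2]; rfl

end DegCards

section Acyclic

lemma acyclic_of_rank {W : Type} [Fintype W] [DecidableEq W] (N : Net W) (g : W → ℕ)
    (h : ∀ a b, (a, b) ∈ N.arcs → g a < g b) : N.Acyclic := by
  have key : ∀ x y, Relation.TransGen N.Arc x y → g x < g y := by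
    intro x y h'
    induction h' with
    | single h'' => exact h _ _ h''
    | tail _ h'' ih => exact ih.trans (h _ _ h'')
  exact fun x hx => lt_irrefl _ (key x x hx)

lemma exists_rank (N : Net V) (hN : N.Acyclic) :
    ∃ g : V → ℕ, ∀ a b, (a, b) ∈ N.arcs → g a < g b := by
  classical
  refine ⟨fun x => (univ.filter (fun u => Relation.TransGen N.Arc u x)).card, ?_⟩
  intro a b hab
  apply Finset.card_lt_card
  rw [Finset.ssubset_iff_of_subset]
  · refine ⟨a, ?_, ?_⟩
    · simp only [Finset.mem_filter, Finset.mem_univ, true_and]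
      exact Relation.TransGen.single hab
    · simp only [Finset.mem_filter, Finset.mem_univ, true_and]
      exact hN a
  · intro u hu
    simp only [Finset.mem_filter, Finset.mem_univ, true_and] at hu ⊢
    exact hu.tail hab

lemma no_self_arc {N : Net V} (hN : N.Acyclic) {x : V} : (x, x) ∉ N.arcs :=
  fun h => hN x (Relation.TransGen.single h)

lemma resolve_acyclic {N : Net V} {p v c : V} (hN : N.Acyclic)
    (hpv : (p, v) ∈ N.arcs) (hvc : (v, c) ∈ N.arcs) :
    (N.resolve p v c).Acyclic := by
  obtain ⟨g, hg⟩ := exists_rank N hN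
  apply acyclic_of_rank _ (fun x => Sum.elim (fun a => 3 * g a)
    (fun i => if i = 0 then 3 * g v + 1 else 3 * g v + 2) x)
  rintro (a | i) (b | j) h
  · rcases arc_ll.1 h with ⟨h1, -, -⟩
    have := hg _ _ h1; simp; omega
  · rcases arc_lr.1 h with ⟨rfl, rfl⟩ | ⟨rfl, rfl⟩
    · simp
    · have := hg _ _ hpv; simp; omega
  · rcases arc_rl.1 h with ⟨rfl, rfl⟩
    have := hg _ _ hvc; simp; omega
  · rcases arc_rr.1 h with ⟨rfl, rfl⟩ | ⟨rfl, rfl⟩ <;> simp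

end Acyclic

section Conn

lemma rtg_symm_of {α : Type*} {r : α → α → Prop} (h : Symmetric r) :
    Symmetric (Relation.ReflTransGen r) := by
  haveI : Std.Symm r := ⟨fun x y hxy => h hxy⟩
  exact fun a b hab => Std.Symm.symm a b hab

lemma sameTree_symm {N : Net V} : Symmetric N.SameTree :=
  rtg_symm_of (fun _ _ h => Or.symm h)

lemma resolve_step_inl {N : Net V} {p v c a b : V} (hab : (a, b) ∈ N.arcs) :
    Relation.ReflTransGen (fun x y => (N.resolve p v c).Arc x y ∨ (N.resolve p v c).Arc y x)
      (Sum.inl a) (Sum.inl b) := by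
  by_cases h1 : (a, b) = (p, v)
  · -- p ~ inr1 ~ inr0 ~ v
    obtain ⟨rfl, rfl⟩ : a = p ∧ b = v := by rw [Prod.ext_iff] at h1; exact h1
    refine Relation.ReflTransGen.head (Or.inl (arc_lr.2 (Or.inr ⟨rfl, rfl⟩))) ?_
    refine Relation.ReflTransGen.head (Or.inr (arc_rr.2 (Or.inl ⟨rfl, rfl⟩))) ?_
    exact Relation.ReflTransGen.single (Or.inr (arc_lr.2 (Or.inl ⟨rfl, rfl⟩)))
  by_cases h2 : (a, b) = (v, c)
  · obtain ⟨rfl, rfl⟩ : a = v ∧ b = c := by rw [Prod.ext_iff] at h2; exact h2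
    refine Relation.ReflTransGen.head (Or.inl (arc_lr.2 (Or.inl ⟨rfl, rfl⟩))) ?_
    refine Relation.ReflTransGen.head (Or.inl (arc_rr.2 (Or.inl ⟨rfl, rfl⟩))) ?_
    exact Relation.ReflTransGen.single (Or.inl (arc_rl.2 ⟨rfl, rfl⟩))
  · exact Relation.ReflTransGen.single (Or.inl (arc_ll.2 ⟨hab, h1, h2⟩))

lemma resolve_sameTree_inl {N : Net V} {p v c a b : V} (h : N.SameTree a b) :
    (N.resolve p v c).SameTree (Sum.inl a) (Sum.inl b) := by
  refine Relation.ReflTransGen.lift' Sum.inl (fun x y hxy => ?_) _ _ h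
  rcases hxy with h' | h'
  · exact resolve_step_inl h'
  · exact (rtg_symm_of (fun _ _ h => Or.symm h)) (resolve_step_inl h')

lemma resolve_connected {N : Net V} {p v c : V} (hconn : N.Connected) :
    (N.resolve p v c).Connected := by
  have hsym : Symmetric (fun x y => (N.resolve p v c).Arc x y ∨ (N.resolve p v c).Arc y x) :=
    fun _ _ h => Or.symm h
  have aux : ∀ x : V ⊕ Fin 3,
      Relation.ReflTransGen (fun x y => (N.resolve p v c).Arc x y ∨ (N.resolve p v c).Arc y x)
        x (Sum.inl v) := by
    have h0 : Relation.ReflTransGen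
        (fun x y => (N.resolve p v c).Arc x y ∨ (N.resolve p v c).Arc y x)
        (Sum.inr 0) (Sum.inl v) :=
      Relation.ReflTransGen.single (Or.inr (arc_lr.2 (Or.inl ⟨rfl, rfl⟩)))
    rintro (a | i)
    · exact resolve_sameTree_inl (hconn a v)
    · obtain rfl | rfl | rfl : i = 0 ∨ i = 1 ∨ i = 2 := (by decide : ∀ i : Fin 3, i = 0 ∨ i = 1 ∨ i = 2) i
      · exact h0
      · exact Relation.ReflTransGen.head (Or.inr (arc_rr.2 (Or.inl ⟨rfl, rfl⟩))) h0
      · exact Relation.ReflTransGen.head (Or.inr (arc_rr.2 (Or.inr ⟨rfl, rfl⟩))) h0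
  intro x y
  exact (aux x).trans ((rtg_symm_of hsym) (aux y))

end Conn

section Props

variable {N : Net V} {p v c : V}

lemma resolve_ctx (hac : N.Acyclic) (hvc_only : N.children v = {c}) (hp : p ∈ N.parents v) :
    (p, v) ∈ N.arcs ∧ (v, c) ∈ N.arcs ∧ p ≠ v ∧ v ≠ c ∧ p ≠ c := by
  have hpv : (p, v) ∈ N.arcs := mem_parents.1 hp
  have hvc : (v, c) ∈ N.arcs := by
    have : c ∈ N.children v := by rw [hvc_only]; exact Finset.mem_singleton_self c
    exact mem_children.1 this
  refine ⟨hpv, hvc, ?_, ?_, ?_⟩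
  · rintro rfl; exact no_self_arc hac hpv
  · rintro rfl; exact no_self_arc hac hvc
  · rintro rfl
    exact hac v (Relation.TransGen.head hvc (Relation.TransGen.single hpv))

variable (hac : N.Acyclic) (hvc_only : N.children v = {c}) (hp : p ∈ N.parents v)

lemma resolve_inDeg_inl_ne_v (hac : N.Acyclic) (hvc_only : N.children v = {c})
    (hp : p ∈ N.parents v) {a : V} (ha : a ≠ v) :
    (N.resolve p v c).inDeg (Sum.inl a) = N.inDeg a := by
  obtain ⟨hpv, hvc, hpv', hvc', hpc⟩ := resolve_ctx hac hvc_only hp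
  by_cases hc : a = c
  · subst hc; exact resolve_inDeg_c hpc hvc' (mem_parents.2 hvc)
  · exact resolve_inDeg_inl ha hc

lemma resolve_outDeg_inl_ne_v (hac : N.Acyclic) (hvc_only : N.children v = {c})
    (hp : p ∈ N.parents v) {a : V} (ha : a ≠ v) :
    (N.resolve p v c).outDeg (Sum.inl a) = N.outDeg a := by
  obtain ⟨hpv, hvc, hpv', hvc', hpc⟩ := resolve_ctx hac hvc_only hp
  by_cases hpa : a = p
  · subst hpa; exact resolve_outDeg_p hpv' (mem_children.2 hpv)
  · exact resolve_outDeg_inl ha hpa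

lemma resolve_inDeg_v' (hac : N.Acyclic) (hvc_only : N.children v = {c})
    (hp : p ∈ N.parents v) (hv3 : N.inDeg v = 3) :
    (N.resolve p v c).inDeg (Sum.inl v) = 2 := by
  obtain ⟨hpv, hvc, hpv', hvc', hpc⟩ := resolve_ctx hac hvc_only hp
  rw [resolve_inDeg_v hp hvc', hv3]

lemma resolve_outDeg_v' (hac : N.Acyclic) (hvc_only : N.children v = {c})
    (hp : p ∈ N.parents v) :
    (N.resolve p v c).outDeg (Sum.inl v) = 1 := by
  obtain ⟨hpv, hvc, hpv', hvc', hpc⟩ := resolve_ctx hac hvc_only hp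
  exact resolve_outDeg_v hvc_only hpv'

lemma resolve_roots (hac : N.Acyclic) (hvc_only : N.children v = {c})
    (hp : p ∈ N.parents v) (hv3 : N.inDeg v = 3) :
    (N.resolve p v c).roots = N.roots.image Sum.inl := by
  obtain ⟨hpv, hvc, hpv', hvc', hpc⟩ := resolve_ctx hac hvc_only hp
  ext x
  simp only [roots, Finset.mem_filter, Finset.mem_univ, true_and, Finset.mem_image]
  simp only [IsRoot]
  rcases x with a | i
  · by_cases ha : a = v
    · subst ha
      rw [resolve_inDeg_v' hac hvc_only hp hv3]
      simp only [Sum.inl.injEq]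
      constructor
      · omega
      · rintro ⟨a', ha', rfl⟩; omega
    · rw [resolve_inDeg_inl_ne_v hac hvc_only hp ha]
      simp only [Sum.inl.injEq]
      constructor
      · intro h; exact ⟨a, h, rfl⟩
      · rintro ⟨a', h, rfl⟩; exact h
  · constructor
    · intro h
      exfalso
      obtain rfl | rfl | rfl : i = 0 ∨ i = 1 ∨ i = 2 := (by decide : ∀ i : Fin 3, i = 0 ∨ i = 1 ∨ i = 2) i
      · rw [resolve_inDeg_r0] at h; omega
      · rw [resolve_inDeg_r1] at h; omega
      · rw [resolve_inDeg_r2] at h; omega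
    · rintro ⟨a', -, h⟩; cases h

lemma resolve_isNetwork (hN : N.IsNetwork) (hq : N.QuasiBinary) (hv3 : N.inDeg v = 3)
    (hvc_only : N.children v = {c}) (hp : p ∈ N.parents v) :
    (N.resolve p v c).IsNetwork := by
  obtain ⟨hac, hconn, hleaf, hroot, hretic, h11⟩ := hN
  obtain ⟨hpv, hvc, hpv', hvc', hpc⟩ := resolve_ctx hac hvc_only hp
  have hvpc : v ∈ N.parents c := mem_parents.2 hvc
  have hcpos : 1 ≤ N.inDeg c := Finset.card_pos.2 ⟨v, hvpc⟩
  have hppos : 1 ≤ N.outDeg p := Finset.card_pos.2 ⟨v, mem_children.2 hpv⟩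
  refine ⟨resolve_acyclic hac hpv hvc, resolve_connected hconn, ?_, ?_, ?_, ?_⟩
  · -- leaves have indegree 1
    rintro (a | i) hx
    · unfold IsLeaf at hx
      by_cases ha : a = v
      · subst ha; rw [resolve_outDeg_v' hac hvc_only hp] at hx; omega
      · rw [resolve_outDeg_inl_ne_v hac hvc_only hp ha] at hx
        by_cases hpa : a = p
        · subst hpa; omega
        · rw [resolve_inDeg_inl_ne_v hac hvc_only hp ha]
          exact hleaf a hx
    · unfold IsLeaf at hx
      obtain rfl | rfl | rfl : i = 0 ∨ i = 1 ∨ i = 2 := (by decide : ∀ i : Fin 3, i = 0 ∨ i = 1 ∨ i = 2) i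
      · rw [resolve_outDeg_r0] at hx; omega
      · rw [resolve_outDeg_r1] at hx; omega
      · exact resolve_inDeg_r2
  · -- roots have outdegree ≥ 2
    rintro (a | i) hx
    · unfold IsRoot at hx
      by_cases ha : a = v
      · subst ha; rw [resolve_inDeg_v' hac hvc_only hp hv3] at hx; omega
      · rw [resolve_inDeg_inl_ne_v hac hvc_only hp ha] at hx
        rw [resolve_outDeg_inl_ne_v hac hvc_only hp ha]
        exact hroot a hx
    · unfold IsRoot at hx
      exfalso
      obtain rfl | rfl | rfl : i = 0 ∨ i = 1 ∨ i = 2 := (by decide : ∀ i : Fin 3, i = 0 ∨ i = 1 ∨ i = 2) i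
      · rw [resolve_inDeg_r0] at hx; omega
      · rw [resolve_inDeg_r1] at hx; omega
      · rw [resolve_inDeg_r2] at hx; omega
  · -- reticulations have outdegree 1
    rintro (a | i) hx
    · unfold IsRetic at hx
      by_cases ha : a = v
      · subst ha; exact resolve_outDeg_v' hac hvc_only hp
      · rw [resolve_inDeg_inl_ne_v hac hvc_only hp ha] at hx
        rw [resolve_outDeg_inl_ne_v hac hvc_only hp ha]
        exact hretic a hx
    · unfold IsRetic at hx
      obtain rfl | rfl | rfl : i = 0 ∨ i = 1 ∨ i = 2 := (by decide : ∀ i : Fin 3, i = 0 ∨ i = 1 ∨ i = 2) i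
      · rw [resolve_inDeg_r0] at hx; omega
      · exact resolve_outDeg_r1
      · rw [resolve_inDeg_r2] at hx; omega
  · -- no vertex has indegree 1 and outdegree 1
    rintro (a | i) ⟨h1, h2⟩
    · by_cases ha : a = v
      · subst ha; rw [resolve_inDeg_v' hac hvc_only hp hv3] at h1; omega
      · rw [resolve_inDeg_inl_ne_v hac hvc_only hp ha] at h1
        rw [resolve_outDeg_inl_ne_v hac hvc_only hp ha] at h2
        exact h11 a ⟨h1, h2⟩
    · obtain rfl | rfl | rfl : i = 0 ∨ i = 1 ∨ i = 2 := (by decide : ∀ i : Fin 3, i = 0 ∨ i = 1 ∨ i = 2) i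
      · rw [resolve_outDeg_r0] at h2; omega
      · rw [resolve_inDeg_r1] at h1; omega
      · rw [resolve_outDeg_r2] at h2; omega

lemma resolve_quasiBinary (hN : N.IsNetwork) (hq : N.QuasiBinary) (hv3 : N.inDeg v = 3)
    (hvc_only : N.children v = {c}) (hp : p ∈ N.parents v) :
    (N.resolve p v c).QuasiBinary := by
  obtain ⟨hac, hconn, hleaf, hroot, hretic, h11⟩ := hN
  obtain ⟨hpv, hvc, hpv', hvc', hpc⟩ := resolve_ctx hac hvc_only hp
  constructor
  · -- tree vertices have outdegree 2
    rintro (a | i) ⟨hx1, hx2⟩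
    · by_cases ha : a = v
      · subst ha; rw [resolve_inDeg_v' hac hvc_only hp hv3] at hx2; omega
      · rw [resolve_inDeg_inl_ne_v hac hvc_only hp ha] at hx2
        unfold IsLeaf at hx1
        rw [resolve_outDeg_inl_ne_v hac hvc_only hp ha] at hx1 ⊢
        exact hq.1 a ⟨hx1, hx2⟩
    · obtain rfl | rfl | rfl : i = 0 ∨ i = 1 ∨ i = 2 := (by decide : ∀ i : Fin 3, i = 0 ∨ i = 1 ∨ i = 2) i
      · exact resolve_outDeg_r0
      · rw [resolve_inDeg_r1] at hx2; omega
      · exact absurd resolve_outDeg_r2 hx1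
  · -- reticulations have indegree 2 or 3
    rintro (a | i) hx
    · unfold IsRetic at hx
      by_cases ha : a = v
      · subst ha; exact Or.inl (resolve_inDeg_v' hac hvc_only hp hv3)
      · rw [resolve_inDeg_inl_ne_v hac hvc_only hp ha] at hx ⊢
        exact hq.2 a hx
    · unfold IsRetic at hx
      obtain rfl | rfl | rfl : i = 0 ∨ i = 1 ∨ i = 2 := (by decide : ∀ i : Fin 3, i = 0 ∨ i = 1 ∨ i = 2) i
      · rw [resolve_inDeg_r0] at hx; omega
      · exact Or.inl resolve_inDeg_r1
      · rw [resolve_inDeg_r2] at hx; omega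

lemma resolve_measure (hN : N.IsNetwork) (hv3 : N.inDeg v = 3)
    (hvc_only : N.children v = {c}) (hp : p ∈ N.parents v) :
    (univ.filter fun x => (N.resolve p v c).inDeg x = 3) =
      ((univ.filter fun a => N.inDeg a = 3).erase v).image Sum.inl := by
  have hac := hN.1
  ext x
  simp only [Finset.mem_filter, Finset.mem_univ, true_and, Finset.mem_image,
    Finset.mem_erase]
  rcases x with a | i
  · by_cases ha : a = v
    · subst ha
      rw [resolve_inDeg_v' hac hvc_only hp hv3]
      simp only [Sum.inl.injEq]
      constructor
      · omega
      · rintro ⟨a', ⟨h1, -⟩, rfl⟩; exact absurd rfl h1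
    · rw [resolve_inDeg_inl_ne_v hac hvc_only hp ha]
      simp only [Sum.inl.injEq]
      constructor
      · intro h; exact ⟨a, ⟨ha, h⟩, rfl⟩
      · rintro ⟨a', ⟨-, h⟩, rfl⟩; exact h
  · constructor
    · intro h
      exfalso
      obtain rfl | rfl | rfl : i = 0 ∨ i = 1 ∨ i = 2 := (by decide : ∀ i : Fin 3, i = 0 ∨ i = 1 ∨ i = 2) i
      · rw [resolve_inDeg_r0] at h; omega
      · rw [resolve_inDeg_r1] at h; omega
      · rw [resolve_inDeg_r2] at h; omega
    · rintro ⟨a', -, h⟩; cases h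

end Props

section Forest

lemma mk_erase_parents {W : Type} [Fintype W] [DecidableEq W] (A : Finset (W × W))
    (u w x : W) : (Net.mk (A.erase (u, w)) : Net W).parents x =
      if x = w then ((Net.mk A : Net W).parents x).erase u
      else (Net.mk A : Net W).parents x := by
  split_ifs with h
  · subst h
    ext y
    simp only [mem_parents, Finset.mem_erase, Prod.ext_iff, ne_eq]
    tauto
  · ext y
    simp only [mem_parents, Finset.mem_erase, Prod.ext_iff, ne_eq]
    tauto

lemma mk_erase_children {W : Type} [Fintype W] [DecidableEq W] (A : Finset (W × W))
    (u w x : W) : (Net.mk (A.erase (u, w)) : Net W).children x =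
      if x = u then ((Net.mk A : Net W).children x).erase w
      else (Net.mk A : Net W).children x := by
  split_ifs with h
  · subst h
    ext y
    simp only [mem_children, Finset.mem_erase, Prod.ext_iff, ne_eq]
    tauto
  · ext y
    simp only [mem_children, Finset.mem_erase, Prod.ext_iff, ne_eq]
    tauto

lemma resolve_arcs_mono {N : Net V} {A : Finset (V × V)} (hA : A ⊆ N.arcs) (p v c : V) :
    ((Net.mk A : Net V).resolve p v c).arcs ⊆ (N.resolve p v c).arcs := by
  rintro ⟨x, y⟩ h
  rw [arc_resolve_iff] at h ⊢
  rcases h with ⟨a, b, h1, h2, h3, h4, h5⟩ | h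
  · exact Or.inl ⟨a, b, hA h1, h2, h3, h4, h5⟩
  · exact Or.inr h

lemma isLeaf_iff_children_empty {W : Type} [Fintype W] [DecidableEq W] (M : Net W) (x : W) :
    M.IsLeaf x ↔ M.children x = ∅ := by
  unfold IsLeaf outDeg
  exact Finset.card_eq_zero

lemma resolve_forestBased {N : Net V} {p v c : V} {A' : Finset (V × V)} {m : ℕ}
    (hN : N.IsNetwork) (hvc_only : N.children v = {c})
    (hp : p ∈ N.parents v) (hsf : N.IsSubdivisionForest A')
    (hmr : (Net.mk A' : Net V).roots.card = m) (hpA : (p, v) ∉ A') :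
    (N.resolve p v c).ProperForestBased m := by
  classical
  obtain ⟨hpv, hvc, hpv', hvc', hpc⟩ := resolve_ctx hN.1 hvc_only hp
  obtain ⟨hsub, hdeg1, hleafiff, hcross⟩ := hsf
  set F : Net V := Net.mk A' with hF
  -- v is not a leaf of N, hence not of F, hence (v,c) ∈ A'
  have hvleaf : ¬ N.IsLeaf v := by
    rw [isLeaf_iff_children_empty, hvc_only]
    simp
  have hFvc : F.children v = {c} := by
    have h1 : F.children v ⊆ N.children v := by
      intro b hb
      exact mem_children.2 (hsub (mem_children.1 hb))
    have h2 : F.children v ≠ ∅ := by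
      intro h
      exact hvleaf ((hleafiff v).1 ((isLeaf_iff_children_empty F v).2 h))
    rw [hvc_only] at h1
    obtain ⟨b, hb⟩ := Finset.nonempty_of_ne_empty h2
    have hbc := Finset.mem_singleton.1 (h1 hb)
    subst hbc
    apply Finset.Subset.antisymm h1
    intro y hy
    rw [Finset.mem_singleton] at hy
    subst hy; exact hb
  have hvcA : (v, c) ∈ A' := by
    have : c ∈ F.children v := by rw [hFvc]; exact Finset.mem_singleton_self c
    exact mem_children.1 this
  have hpFv : p ∉ F.parents v := fun h => hpA (mem_parents.1 h)
  have hvFc : v ∈ F.parents c := mem_parents.2 hvcA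
  -- the new forest
  set F2 : Net (V ⊕ Fin 3) := F.resolve p v c with hF2
  set A'' : Finset ((V ⊕ Fin 3) × (V ⊕ Fin 3)) := F2.arcs.erase (Sum.inl p, Sum.inr 1)
    with hA''
  set G : Net (V ⊕ Fin 3) := Net.mk A'' with hG
  -- parents in G
  have hGparents : ∀ x, G.parents x =
      if x = Sum.inr 1 then (F2.parents x).erase (Sum.inl p) else F2.parents x := by
    intro x
    exact mk_erase_parents F2.arcs (Sum.inl p) (Sum.inr 1) x
  have hGchildren : ∀ x, G.children x =
      if x = Sum.inl p then (F2.children x).erase (Sum.inr 1) else F2.children x := by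
    intro x
    exact mk_erase_children F2.arcs (Sum.inl p) (Sum.inr 1) x
  -- the collapse map
  set f : V ⊕ Fin 3 → V := Sum.elim id (fun i => if i = 1 then c else v) with hf
  have harc : ∀ x y, G.Arc x y → F.SameTree (f x) (f y) := by
    rintro (a | i) (b | j) h
    all_goals
      have h2 : (_, _) ∈ F2.arcs := Finset.mem_of_mem_erase h
      have h3 := Finset.mem_erase.1 h
    · rcases arc_ll.1 h2 with ⟨hab, -, -⟩
      exact Relation.ReflTransGen.single (Or.inl hab)
    · rcases arc_lr.1 h2 with ⟨rfl, rfl⟩ | ⟨rfl, rfl⟩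
      · simp only [hf, Sum.elim_inl, Sum.elim_inr, if_neg (by decide : ¬(0 : Fin 3) = 1)]
        exact Relation.ReflTransGen.refl
      · exact absurd rfl h3.1
    · rcases arc_rl.1 h2 with ⟨rfl, rfl⟩
      simp only [hf, Sum.elim_inl, Sum.elim_inr, if_pos rfl]
      exact Relation.ReflTransGen.refl
    · rcases arc_rr.1 h2 with ⟨rfl, rfl⟩ | ⟨rfl, rfl⟩
      · simp only [hf, Sum.elim_inr, if_neg (by decide : ¬(0 : Fin 3) = 1), if_pos rfl]
        exact Relation.ReflTransGen.single (Or.inl hvcA)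
      · simp only [hf, Sum.elim_inr, if_neg (by decide : ¬(0 : Fin 3) = 1),
          if_neg (by decide : ¬(2 : Fin 3) = 1)]
        exact Relation.ReflTransGen.refl
  have hcollapse : ∀ x y, G.SameTree x y → F.SameTree (f x) (f y) := by
    intro x y h
    refine Relation.ReflTransGen.lift' f (fun a b hab => ?_) _ _ h
    rcases hab with h' | h'
    · exact harc a b h'
    · exact sameTree_symm (harc b a h')
  refine ⟨A'', ⟨?_, ?_, ?_, ?_⟩, ?_⟩
  · -- A'' ⊆ arcs of resolved network
    exact (Finset.erase_subset _ _).trans (resolve_arcs_mono hsub p v c)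
  · -- indegree ≤ 1 in G
    intro x
    unfold inDeg
    rw [show (Net.mk A'' : Net (V ⊕ Fin 3)).parents x = G.parents x from rfl, hGparents]
    split_ifs with hx
    · subst hx
      rw [show F2.parents (Sum.inr 1) = {Sum.inl p, Sum.inr 0} from resolve_parents_r1]
      rw [Finset.erase_insert (by simp)]
      simp
    · rcases x with a | i
      · by_cases ha : a = v
        · rw [ha]
          rw [show F2.parents (Sum.inl v) = ((F.parents v).erase p).image Sum.inl from
              resolve_parents_v hvc']
          calc (((F.parents v).erase p).image Sum.inl).card
              ≤ ((F.parents v).erase p).card := Finset.card_image_le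
            _ ≤ (F.parents v).card := Finset.card_erase_le
            _ ≤ 1 := hdeg1 v
        · by_cases hc : a = c
          · rw [hc]
            rw [show F2.parents (Sum.inl c) =
                insert (Sum.inr 1) (((F.parents c).erase v).image Sum.inl) from
                resolve_parents_c hpc hvc']
            have hempty : (F.parents c).erase v = ∅ := by
              apply Finset.eq_empty_of_forall_notMem
              intro y hy
              rw [Finset.mem_erase] at hy
              exact hy.1 (Finset.card_le_one.1 (hdeg1 c) y hy.2 v hvFc)
            rw [hempty]
            simp
          · rw [show F2.parents (Sum.inl a) = (F.parents a).image Sum.inl from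
                resolve_parents_inl ha hc]
            calc ((F.parents a).image Sum.inl).card
                ≤ (F.parents a).card := Finset.card_image_le
              _ ≤ 1 := hdeg1 a
      · obtain rfl | rfl | rfl : i = 0 ∨ i = 1 ∨ i = 2 :=
          (by decide : ∀ i : Fin 3, i = 0 ∨ i = 1 ∨ i = 2) i
        · rw [show F2.parents (Sum.inr 0) = {Sum.inl v} from resolve_parents_r0]; simp
        · exact absurd rfl hx
        · rw [show F2.parents (Sum.inr 2) = {Sum.inr 0} from resolve_parents_r2]; simp
  · -- leaves of G = leaves of resolved network
    intro x
    rw [isLeaf_iff_children_empty, isLeaf_iff_children_empty,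
      show (Net.mk A'' : Net (V ⊕ Fin 3)).children x = G.children x from rfl, hGchildren]
    split_ifs with hx
    · subst hx
      rw [show F2.children (Sum.inl p) =
          insert (Sum.inr 1) (((F.children p).erase v).image Sum.inl) from
          resolve_children_p hpv']
      rw [Finset.erase_insert (by simp)]
      have hvFp : v ∉ F.children p := fun h => hpA (mem_children.1 h)
      rw [Finset.erase_eq_of_notMem hvFp]
      rw [show (N.resolve p v c).children (Sum.inl p) =
          insert (Sum.inr 1) (((N.children p).erase v).image Sum.inl) from
          resolve_children_p hpv']
      constructor
      · intro h
        exfalso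
        have : F.children p = ∅ := by
          by_contra hne
          obtain ⟨y, hy⟩ := Finset.nonempty_of_ne_empty hne
          have : (Sum.inl y : V ⊕ Fin 3) ∈ ((F.children p).image Sum.inl) :=
            Finset.mem_image_of_mem _ hy
          rw [h] at this
          exact absurd this (Finset.notMem_empty _)
        have hpleaf : N.IsLeaf p := (hleafiff p).1 (by
          rw [isLeaf_iff_children_empty]; exact this)
        rw [isLeaf_iff_children_empty] at hpleaf
        have : v ∈ N.children p := mem_children.2 hpv
        rw [hpleaf] at this
        exact absurd this (Finset.notMem_empty _)
      · intro h
        exfalso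
        have : Sum.inr 1 ∈ (∅ : Finset (V ⊕ Fin 3)) := h ▸ Finset.mem_insert_self _ _
        exact absurd this (Finset.notMem_empty _)
    · rcases x with a | i
      · by_cases ha : a = v
        · rw [ha]
          rw [show F2.children (Sum.inl v) = {Sum.inr 0} from resolve_children_v hFvc hpv',
            show (N.resolve p v c).children (Sum.inl v) = {Sum.inr 0} from
              resolve_children_v hvc_only hpv']
        · have hap : a ≠ p := fun hap => hx (by rw [hap])
          rw [show F2.children (Sum.inl a) = (F.children a).image Sum.inl from
              resolve_children_inl ha hap,
            show (N.resolve p v c).children (Sum.inl a) = (N.children a).image Sum.inl from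
              resolve_children_inl ha hap]
          rw [Finset.image_eq_empty, Finset.image_eq_empty,
            ← isLeaf_iff_children_empty, ← isLeaf_iff_children_empty]
          exact hleafiff a
      · obtain rfl | rfl | rfl : i = 0 ∨ i = 1 ∨ i = 2 :=
          (by decide : ∀ i : Fin 3, i = 0 ∨ i = 1 ∨ i = 2) i
        · rw [show F2.children (Sum.inr 0) = {Sum.inr 1, Sum.inr 2} from resolve_children_r0,
            show (N.resolve p v c).children (Sum.inr 0) = {Sum.inr 1, Sum.inr 2} from
              resolve_children_r0]
        · rw [show F2.children (Sum.inr 1) = {Sum.inl c} from resolve_children_r1,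
            show (N.resolve p v c).children (Sum.inr 1) = {Sum.inl c} from
              resolve_children_r1]
        · rw [show F2.children (Sum.inr 2) = ∅ from resolve_children_r2,
            show (N.resolve p v c).children (Sum.inr 2) = ∅ from resolve_children_r2]
  · -- cross-tree condition
    rintro ⟨x, y⟩ hxy hnot hst
    rw [show ((x, y) : (V ⊕ Fin 3) × (V ⊕ Fin 3)).1 = x from rfl,
      show ((x, y) : (V ⊕ Fin 3) × (V ⊕ Fin 3)).2 = y from rfl] at hst
    rw [arc_resolve_iff] at hxy
    rcases hxy with ⟨a, b, h1, h2, h3, rfl, rfl⟩ | ⟨rfl, rfl⟩ | ⟨rfl, rfl⟩ | ⟨rfl, rfl⟩ |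
      ⟨rfl, rfl⟩ | ⟨rfl, rfl⟩
    · -- (inl a, inl b) with (a,b) ∈ N.arcs
      have habA : (a, b) ∉ A' := by
        intro hab
        apply hnot
        rw [hA'', Finset.mem_erase]
        refine ⟨by simp, ?_⟩
        exact arc_ll.2 ⟨hab, h2, h3⟩
      have := hcross (a, b) h1 habA
      exact this (hcollapse _ _ hst)
    · -- (inl v, inr 0) ∈ A''
      exact hnot (Finset.mem_erase.2 ⟨by simp, arc_lr.2 (Or.inl ⟨rfl, rfl⟩)⟩)
    · exact hnot (Finset.mem_erase.2 ⟨by simp, arc_rr.2 (Or.inl ⟨rfl, rfl⟩)⟩)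
    · exact hnot (Finset.mem_erase.2 ⟨by simp, arc_rl.2 ⟨rfl, rfl⟩⟩)
    · exact hnot (Finset.mem_erase.2 ⟨by simp, arc_rr.2 (Or.inr ⟨rfl, rfl⟩)⟩)
    · -- (inl p, inr 1)
      have h4 := hcollapse _ _ hst
      simp only [hf, Sum.elim_inl, Sum.elim_inr, if_pos rfl, id] at h4
      have h5 : F.SameTree p v :=
        h4.trans (sameTree_symm (Relation.ReflTransGen.single (Or.inl hvcA)))
      exact hcross (p, v) hpv hpA h5
  · -- root count
    have hroots : (Net.mk A'' : Net (V ⊕ Fin 3)).roots = F.roots.image Sum.inl := by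
      ext x
      simp only [roots, Finset.mem_filter, Finset.mem_univ, true_and, Finset.mem_image]
      simp only [IsRoot, inDeg]
      rw [show (Net.mk A'' : Net (V ⊕ Fin 3)).parents x = G.parents x from rfl, hGparents]
      split_ifs with hx
      · subst hx
        rw [show F2.parents (Sum.inr 1) = {Sum.inl p, Sum.inr 0} from resolve_parents_r1,
          Finset.erase_insert (by simp)]
        simp
      · rcases x with a | i
        · by_cases ha : a = v
          · rw [ha]
            rw [show F2.parents (Sum.inl v) = ((F.parents v).erase p).image Sum.inl from
                resolve_parents_v hvc',
              Finset.erase_eq_of_notMem hpFv,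
              Finset.card_image_of_injective _ Sum.inl_injective]
            simp only [Sum.inl.injEq]
            constructor
            · intro h; exact ⟨v, h, rfl⟩
            · rintro ⟨a', h, rfl⟩; exact h
          · by_cases hc : a = c
            · rw [hc]
              rw [show F2.parents (Sum.inl c) =
                  insert (Sum.inr 1) (((F.parents c).erase v).image Sum.inl) from
                  resolve_parents_c hpc hvc']
              rw [Finset.card_insert_of_notMem (by simp)]
              simp only [Sum.inl.injEq]
              constructor
              · omega
              · rintro ⟨a', h, hac'⟩
                rw [hac'] at h
                rw [Finset.card_eq_zero] at h
                rw [h] at hvFc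
                exact absurd hvFc (Finset.notMem_empty _)
            · rw [show F2.parents (Sum.inl a) = (F.parents a).image Sum.inl from
                  resolve_parents_inl ha hc,
                Finset.card_image_of_injective _ Sum.inl_injective]
              simp only [Sum.inl.injEq]
              constructor
              · intro h; exact ⟨a, h, rfl⟩
              · rintro ⟨a', h, rfl⟩; exact h
        · constructor
          · intro h
            exfalso
            obtain rfl | rfl | rfl : i = 0 ∨ i = 1 ∨ i = 2 :=
              (by decide : ∀ i : Fin 3, i = 0 ∨ i = 1 ∨ i = 2) i
            · rw [show F2.parents (Sum.inr 0) = {Sum.inl v} from resolve_parents_r0] at h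
              simp at h
            · exact absurd rfl hx
            · rw [show F2.parents (Sum.inr 2) = {Sum.inr 0} from resolve_parents_r2] at h
              simp at h
          · rintro ⟨a', -, h⟩; cases h
    rw [hroots, Finset.card_image_of_injective _ Sum.inl_injective]
    exact hmr

lemma exists_good_parent {N : Net V} {v : V} {A' : Finset (V × V)}
    (hv3 : N.inDeg v = 3) (hsf : N.IsSubdivisionForest A') :
    ∃ p ∈ N.parents v, (p, v) ∉ A' := by
  by_contra h
  push_neg at h
  have hsub : N.parents v ⊆ (Net.mk A' : Net V).parents v := by
    intro u hu
    exact mem_parents.2 (h u hu)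
  have := Finset.card_le_card hsub
  have h1 := hsf.2.1 v
  unfold inDeg at hv3 h1
  omega

end Forest

section Final

lemma binary_of_quasi {N : Net V} (hN : N.IsNetwork) (hq : N.QuasiBinary)
    (h3 : ∀ x, N.inDeg x ≠ 3) : N.Binary := by
  obtain ⟨-, -, hleaf, -, hretic, -⟩ := hN
  have key : ∀ x : V, N.inDeg x ≤ 2 ∧ N.outDeg x ≤ 2 ∧
      (¬ N.IsRoot x → N.inDeg x + N.outDeg x = 1 ∨ N.inDeg x + N.outDeg x = 3) := by
    intro x
    by_cases hr : 2 ≤ N.inDeg x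
    · have h2 : N.inDeg x = 2 := by
        rcases hq.2 x hr with h | h
        · exact h
        · exact absurd h (h3 x)
      have ho : N.outDeg x = 1 := hretic x hr
      exact ⟨by omega, by omega, fun _ => by omega⟩
    · push_neg at hr
      by_cases hl : N.IsLeaf x
      · have hi : N.inDeg x = 1 := hleaf x hl
        unfold IsLeaf at hl
        exact ⟨by omega, by omega, fun _ => by omega⟩
      · have ho : N.outDeg x = 2 := hq.1 x ⟨hl, by omega⟩
        refine ⟨by omega, by omega, fun hroot => ?_⟩
        unfold IsRoot at hroot
        omega
  exact ⟨fun x => ⟨(key x).1, (key x).2.1⟩, fun x hx => (key x).2.2 hx⟩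

end Final






end Net
end FB

open FB FB.Net in
/-- Every quasi-binary proper forest-based m-network (m ≥ 2) can be
transformed by a finite sequence of resolution operations into a binary m-network
that is also proper forest-based. -/
theorem stmt18 (m : ℕ) (hm : 2 ≤ m) (M : FB.BNet)
    (hq : M.net.QuasiBinary) (hmn : M.net.IsMNetwork m)
    (hfb : M.net.ProperForestBased m) :
    ∃ M' : FB.BNet, Relation.ReflTransGen FB.ResolveStep M M' ∧
      M'.net.Binary ∧ M'.net.IsMNetwork m ∧ M'.net.ProperForestBased m := by
  classical
  suffices H : ∀ n (M : FB.BNet),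
      (Finset.univ.filter fun x => M.net.inDeg x = 3).card = n → M.net.QuasiBinary →
      M.net.IsMNetwork m → M.net.ProperForestBased m →
      ∃ M' : FB.BNet, Relation.ReflTransGen FB.ResolveStep M M' ∧
        M'.net.Binary ∧ M'.net.IsMNetwork m ∧ M'.net.ProperForestBased m by
    exact H _ M rfl hq hmn hfb
  intro n
  induction n using Nat.strong_induction_on with
  | _ n ih =>
    intro M hcard hq hmn hfb
    by_cases h0 : (Finset.univ.filter fun x => M.net.inDeg x = 3) = ∅
    · refine ⟨M, Relation.ReflTransGen.refl, ?_, hmn, hfb⟩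
      apply binary_of_quasi hmn.1 hq
      intro x hx
      have : x ∈ (Finset.univ.filter fun x => M.net.inDeg x = 3) := by
        simp [hx]
      rw [h0] at this
      exact absurd this (Finset.notMem_empty _)
    · obtain ⟨v, hv⟩ := Finset.nonempty_of_ne_empty h0
      have hv3 : M.net.inDeg v = 3 := (Finset.mem_filter.1 hv).2
      have hretic : M.net.IsRetic v := by unfold Net.IsRetic; omega
      have hout : M.net.outDeg v = 1 := hmn.1.2.2.2.2.1 v hretic
      obtain ⟨c, hc⟩ := Finset.card_eq_one.1 hout
      obtain ⟨A', hsf, hmA⟩ := hfb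
      obtain ⟨p, hp, hpA⟩ := exists_good_parent hv3 hsf
      let M' : FB.BNet := { V := M.V ⊕ Fin 3, net := M.net.resolve p v c }
      have hstep : FB.ResolveStep M M' :=
        ⟨p, v, c, hretic, by omega, hc, hp, ⟨Equiv.refl _, fun u w => Iff.rfl⟩⟩
      have hq' : M'.net.QuasiBinary := resolve_quasiBinary hmn.1 hq hv3 hc hp
      have hnet' : M'.net.IsNetwork := resolve_isNetwork hmn.1 hq hv3 hc hp
      have hroots' : M'.net.roots.card = m := by
        show ((M.net.resolve p v c).roots).card = m
        rw [resolve_roots hmn.1.1 hc hp hv3,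
          Finset.card_image_of_injective _ Sum.inl_injective]
        exact hmn.2
      have hfb' : M'.net.ProperForestBased m :=
        resolve_forestBased hmn.1 hc hp hsf hmA hpA
      have hpos : 1 ≤ n := by
        rw [← hcard]
        exact Finset.card_pos.2 ⟨v, hv⟩
      have hcard' : (Finset.univ.filter fun x => M'.net.inDeg x = 3).card = n - 1 := by
        show (Finset.univ.filter fun x => (M.net.resolve p v c).inDeg x = 3).card = n - 1
        rw [resolve_measure hmn.1 hv3 hc hp,
          Finset.card_image_of_injective _ Sum.inl_injective,
          Finset.card_erase_of_mem hv, hcard]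
      obtain ⟨M'', hrtg, hbin, hmn'', hfb''⟩ :=
        ih (n - 1) (by omega) M' hcard' hq' ⟨hnet', hroots'⟩ hfb'
      exact ⟨M'', Relation.ReflTransGen.head hstep hrtg, hbin, hmn'', hfb''⟩
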